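/- In ℚ[[t]], the expansion of 1 + t + t^2 as ∏_{k≥1}(1+t^k)^{a(k)} has a(k) = 1 if k = 2^j for some j ≥ 0, a(k) = −1 if k = 3·2^j for some j ≥ 0, and a(k) = 0 otherwise. -/

import Mathlib

/-!
Uniqueness is triangularity: the coefficient of `t^n` in `∏_{k ≤ n} (1 + t^k)^(a k)` is `a n` plus
a function of `a 1, …, a (n-1)` (`coeff_mul_binomPow`).

For existence, `∏_{j} (1 + t^(c·2^j))` telescopes to `1/(1 - t^c)`, so the proposed exponents give
`(1 - t^3)/(1 - t) = 1 + t + t^2`. At a finite level `n` this holds modulo `t^(n+1)` once both sides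
are multiplied by the unit `(1 - t) ∏_j (1 + t^(3·2^j))`.
-/

/-- The binomial series `(1 + t^k)^a = ∑_{i≥0} C(a,i) t^(k·i)` in `ℚ[[t]]`,
for a rational exponent `a`, where `C(a,i) = a(a-1)⋯(a-i+1)/i!` is the
generalized binomial coefficient (`Ring.choose`). -/
noncomputable def binomPow (a : ℚ) (k : ℕ) : PowerSeries ℚ :=
  PowerSeries.mk fun n => if k ∣ n then Ring.choose a (n / k) else 0

/-- `a : ℕ → ℚ` is the sequence of exponents of `F ∈ ℚ[[t]]` in the
factorization `F = ∏_{k≥1} (1 + t^k)^(a k)`. The t-adically convergent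
infinite product is expressed coefficientwise: the factor for `k` is
`1 + O(t^k)`, so the coefficient of `t^n` of the product is that of the
finite partial product over `1 ≤ k ≤ n`. -/
def IsExpSeq (F : PowerSeries ℚ) (a : ℕ → ℚ) : Prop :=
  ∀ n : ℕ,
    PowerSeries.coeff n (∏ k ∈ Finset.Icc 1 n, binomPow (a k) k) =
      PowerSeries.coeff n F

open Classical

open PowerSeries Finset

lemma Ring.choose_neg_one {R : Type*} [CommRing R] [BinomialRing R] (n : ℕ) :
    Ring.choose (-1 : R) n = (-1) ^ n := by
  induction n with
  | zero => simp
  | succ n ih =>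
    have h := Ring.choose_succ_succ (-1 : R) n
    rw [neg_add_cancel, Ring.choose_zero_succ R n, ih] at h
    rw [pow_succ]
    linear_combination -h

lemma coeff_eq_of_X_pow_dvd_sub {R : Type*} [CommRing R] {P Q : R⟦X⟧} {n : ℕ}
    (h : X ^ (n + 1) ∣ P - Q) : coeff n P = coeff n Q :=
  sub_eq_zero.mp (by simpa using X_pow_dvd_iff.mp h n n.lt_succ_self)

lemma constantCoeff_binomPow (c : ℚ) (k : ℕ) : constantCoeff (binomPow c k) = 1 := by
  simp [binomPow, constantCoeff_mk]

section BinomPow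

variable {k : ℕ}

lemma binomPow_zero (hk : 0 < k) : binomPow 0 k = 1 := by
  ext n
  rcases Nat.eq_zero_or_pos n with rfl | hn
  · simp [binomPow]
  · simp only [binomPow, coeff_mk, coeff_one, hn.ne', if_false]
    split_ifs with h
    · exact Ring.choose_zero_pos ℚ (Nat.div_pos (Nat.le_of_dvd hn h) hk)
    · rfl

lemma binomPow_one (hk : 0 < k) : binomPow 1 k = 1 + X ^ k := by
  ext n
  simp only [binomPow, coeff_mk, map_add, coeff_one, coeff_X_pow]
  by_cases hdvd : k ∣ n
  · obtain ⟨m, rfl⟩ := hdvd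
    have h1 : Ring.choose (1 : ℚ) m = Nat.choose 1 m := by
      exact_mod_cast Ring.choose_natCast (R := ℚ) 1 m
    rw [if_pos (dvd_mul_right k m), Nat.mul_div_cancel_left _ hk, h1]
    rcases m with _ | _ | m
    · simp [hk.ne]
    · simp [hk.ne']
    · simp [hk.ne', Nat.choose_eq_zero_of_lt (by omega : 1 < m + 2)]
  · have h0 : n ≠ 0 := by rintro rfl; exact hdvd (dvd_zero k)
    have hnk : n ≠ k := by rintro rfl; exact hdvd dvd_rfl
    simp [hdvd, h0, hnk]

lemma binomPow_neg_one_mul (hk : 0 < k) : binomPow (-1) k * (1 + X ^ k) = 1 := by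
  ext n
  rw [mul_add, mul_one, map_add, coeff_mul_X_pow', coeff_one]
  simp only [binomPow, coeff_mk, Ring.choose_neg_one]
  rcases lt_or_ge n k with hnk | hnk
  · rcases Nat.eq_zero_or_pos n with rfl | hn
    · simp [hk.ne']
    · have : ¬ k ∣ n := fun h => (Nat.le_of_dvd hn h).not_gt hnk
      simp [this, hnk.not_ge, hn.ne']
  · obtain ⟨m, rfl⟩ := Nat.exists_eq_add_of_le' hnk
    simp only [Nat.dvd_add_self_right, Nat.add_sub_cancel, if_pos hnk, Nat.add_div_right _ hk,
      (Nat.add_pos_right m hk).ne', if_false]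
    split_ifs <;> ring

lemma X_pow_succ_dvd_binomPow_sub (c : ℚ) (hk : 0 < k) :
    X ^ (k + 1) ∣ binomPow c k - (1 + C c * X ^ k) := by
  refine X_pow_dvd_iff.mpr fun n hn => ?_
  simp only [binomPow, map_sub, map_add, coeff_mk, coeff_one, coeff_C_mul_X_pow]
  rcases Nat.eq_zero_or_pos n with rfl | hn0
  · simp [hk.ne]
  rcases eq_or_ne n k with rfl | hne
  · simp [hn0.ne', Nat.div_self hn0]
  · have : ¬ k ∣ n := fun h => hne (Nat.eq_of_dvd_of_lt_two_mul hn0.ne' h (by omega))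
    simp [this, hne, hn0.ne']

lemma coeff_mul_binomPow (P : ℚ⟦X⟧) (c : ℚ) (hk : 0 < k) :
    coeff k (P * binomPow c k) = coeff k P + c * constantCoeff P := by
  have h : X ^ (k + 1) ∣ P * binomPow c k - (P + C c * (X ^ k * P)) := by
    convert dvd_mul_of_dvd_right (X_pow_succ_dvd_binomPow_sub c hk) P using 1
    ring
  rw [coeff_eq_of_X_pow_dvd_sub h, map_add, coeff_C_mul, coeff_X_pow_mul', if_pos le_rfl,
    Nat.sub_self, coeff_zero_eq_constantCoeff_apply]

end BinomPow

lemma constantCoeff_prod_binomPow (a : ℕ → ℚ) (s : Finset ℕ) :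
    constantCoeff (∏ k ∈ s, binomPow (a k) k) = 1 := by
  simp [map_prod, constantCoeff_binomPow]

lemma IsExpSeq.unique {F : ℚ⟦X⟧} {a b : ℕ → ℚ} (ha : IsExpSeq F a) (hb : IsExpSeq F b) :
    ∀ k, 1 ≤ k → a k = b k := by
  intro n
  induction n using Nat.strong_induction_on with
  | _ n ih =>
    intro hn
    obtain ⟨m, rfl⟩ := Nat.exists_eq_add_of_le' hn
    have hprod : ∏ k ∈ Icc 1 m, binomPow (a k) k = ∏ k ∈ Icc 1 m, binomPow (b k) k :=
      prod_congr rfl fun k hk => by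
        obtain ⟨hk1, hkm⟩ := mem_Icc.mp hk
        rw [ih k (by omega) hk1]
    have h := (ha (m + 1)).trans (hb (m + 1)).symm
    rw [prod_Icc_succ_top (by omega), prod_Icc_succ_top (by omega), hprod,
      coeff_mul_binomPow _ _ m.succ_pos, coeff_mul_binomPow _ _ m.succ_pos,
      constantCoeff_prod_binomPow] at h
    simpa using h

lemma one_sub_X_pow_mul_prod_one_add {R : Type*} [CommRing R] (c m : ℕ) :
    (1 - X ^ c) * ∏ j ∈ range m, (1 + X ^ (c * 2 ^ j) : R⟦X⟧) = 1 - X ^ (c * 2 ^ m) := by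
  induction m with
  | zero => simp
  | succ m ih =>
    rw [prod_range_succ, ← mul_assoc, ih, pow_succ, ← mul_assoc, pow_mul _ _ 2]
    ring

lemma prod_Icc_ite_pow_two_mul {M : Type*} [CommMonoid M] (f : ℕ → M) {c : ℕ} (hc : 0 < c)
    (n : ℕ) : ∏ k ∈ Icc 1 n, (if ∃ j, k = c * 2 ^ j then f k else 1) =
      ∏ j ∈ range (Nat.size (n / c)), f (c * 2 ^ j) := by
  have hinj : Set.InjOn (fun j => c * 2 ^ j) (range (Nat.size (n / c))) := fun i _ j _ h =>
    Nat.pow_right_injective le_rfl (Nat.eq_of_mul_eq_mul_left hc h)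
  rw [← prod_filter, ← prod_image hinj]
  congr 1
  ext k
  simp only [mem_filter, mem_Icc, mem_image, mem_range, Nat.lt_size, Nat.le_div_iff_mul_le hc]
  constructor
  · rintro ⟨⟨-, hkn⟩, j, rfl⟩
    exact ⟨j, by linarith, rfl⟩
  · rintro ⟨j, hj, rfl⟩
    exact ⟨⟨Nat.one_le_iff_ne_zero.mpr (by positivity), by linarith⟩, j, rfl⟩

noncomputable def trinomialExp (k : ℕ) : ℚ :=
  if ∃ j : ℕ, k = 2 ^ j then 1 else if ∃ j : ℕ, k = 3 * 2 ^ j then -1 else 0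

lemma binomPow_trinomialExp {k : ℕ} (hk : 0 < k) :
    binomPow (trinomialExp k) k =
      (if ∃ j, k = 2 ^ j then 1 + X ^ k else 1) *
        (if ∃ j, k = 3 * 2 ^ j then binomPow (-1) k else 1) := by
  have hdisj : (∃ j, k = 3 * 2 ^ j) → ¬ ∃ i, k = 2 ^ i := by
    rintro ⟨j, rfl⟩ ⟨i, hi⟩
    have : 3 ∣ 2 ^ i := ⟨2 ^ j, by omega⟩
    exact absurd (Nat.prime_three.dvd_of_dvd_pow this) (by norm_num)
  simp only [trinomialExp]
  split_ifs with hpow hthree hthree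
  · exact absurd hpow (hdisj hthree)
  · rw [binomPow_one hk, mul_one]
  · rw [one_mul]
  · rw [binomPow_zero hk, mul_one]

lemma isExpSeq_trinomialExp : IsExpSeq (1 + X + X ^ 2) trinomialExp := by
  intro n
  set A := ∏ j ∈ range (Nat.size n), (1 + X ^ 2 ^ j : ℚ⟦X⟧)
  set B := ∏ j ∈ range (Nat.size (n / 3)), binomPow (-1) (3 * 2 ^ j)
  set E := ∏ j ∈ range (Nat.size (n / 3)), (1 + X ^ (3 * 2 ^ j) : ℚ⟦X⟧)
  have hP : ∏ k ∈ Icc 1 n, binomPow (trinomialExp k) k = A * B := by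
    have hpow := prod_Icc_ite_pow_two_mul (fun k => (1 + X ^ k : ℚ⟦X⟧)) one_pos n
    simp only [one_mul, Nat.div_one] at hpow
    rw [prod_congr rfl fun k hk => binomPow_trinomialExp (mem_Icc.mp hk).1, prod_mul_distrib,
      hpow, prod_Icc_ite_pow_two_mul _ three_pos]
  have hBC : B * E = 1 := by
    rw [← prod_mul_distrib]
    exact prod_eq_one fun j _ => binomPow_neg_one_mul (by positivity)
  have hA : (1 - X) * A = 1 - X ^ 2 ^ Nat.size n := by
    simpa using one_sub_X_pow_mul_prod_one_add (R := ℚ) 1 (Nat.size n)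
  have hE := one_sub_X_pow_mul_prod_one_add (R := ℚ) 3 (Nat.size (n / 3))
  have hunit : IsUnit ((1 - X) * E) := by
    simp [isUnit_iff_constantCoeff, E]
  apply coeff_eq_of_X_pow_dvd_sub
  rw [← hunit.dvd_mul_right, hP]
  have hn1 := Nat.lt_size_self n
  have hn3 := Nat.lt_size_self (n / 3)
  have hdiff : (A * B - (1 + X + X ^ 2)) * ((1 - X) * E) =
      X ^ (3 * 2 ^ Nat.size (n / 3)) - X ^ 2 ^ Nat.size n := by
    linear_combination (1 - X) * A * hBC + hA - hE
  rw [hdiff]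
  exact dvd_sub (pow_dvd_pow _ (by omega)) (pow_dvd_pow _ (by omega))

/-- the unique exponents with
`∏_{k≥1}(1+t^k)^(a k) = 1 + t + t^2` in ℚ[[t]] are `a k = 1` if
`k = 2^j`, `a k = −1` if `k = 3·2^j`, and `a k = 0` otherwise. -/
theorem stmt8 (a : ℕ → ℚ)
    (ha : IsExpSeq (1 + PowerSeries.X + PowerSeries.X ^ 2) a) :
    ∀ k : ℕ, 1 ≤ k →
      a k = if ∃ j : ℕ, k = 2 ^ j then 1
        else if ∃ j : ℕ, k = 3 * 2 ^ j then -1 else 0 :=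
  ha.unique isExpSeq_trinomialExp
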